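/- arXiv:2301.08517 — 7 statements merged into one kernel-verified Lean document; each statement's English description precedes it below -/
import Mathlib

section
/- Property P2.1: If the cost sequence c satisfies the feasibility constraints for all rounds i' ≤ i−1, then at the start of round i every active group has at least (1−Δ)·ε/K of unlocked budget remaining; that is, for every k ∈ {1,…,K}, B_k − Σ_{j=i−k+1}^{i−1} c_j ≥ (1−Δ)·ε/K. -/
/-- Cumulative unlocked budget after a group has been active for `k` rounds:
`B_k = (ε/K)·((1+Δ)·min(k, K/2) + (1−Δ)·max(k − K/2, 0))`. -/
noncomputable def unlockedBudget (K : ℕ) (ε Δ : ℝ) (k : ℕ) : ℝ :=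
  (ε / K) * ((1 + Δ) * ((min k (K / 2) : ℕ) : ℝ) + (1 - Δ) * ((k - K / 2 : ℕ) : ℝ))

/-- A cost sequence is feasible up to round `m` if for every round `i' ≤ m` and
every age `k ∈ {1,…,K}` the total cost charged to the group of age `k` does not
exceed its unlocked budget. -/
def FeasibleUpTo (K : ℕ) (ε Δ : ℝ) (c : ℤ → ℝ) (m : ℤ) : Prop :=
  ∀ i : ℤ, i ≤ m → ∀ k : ℕ, 1 ≤ k → k ≤ K →
    ∑ j ∈ Finset.Icc (i - (k : ℤ) + 1) i, c j ≤ unlockedBudget K ε Δ k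

theorem stmt_4 (K : ℕ) (hK : Even K) (hK2 : 2 ≤ K) (ε Δ : ℝ) (hε : 0 < ε)
    (hΔ0 : 0 ≤ Δ) (hΔ1 : Δ ≤ 1) (c : ℤ → ℝ)
    (hpos : ∀ j : ℤ, 0 ≤ c j) (hzero : ∀ j : ℤ, j ≤ 0 → c j = 0)
    (i : ℤ) (hi : 1 ≤ i) (hfeas : FeasibleUpTo K ε Δ c (i - 1)) :
    ∀ k : ℕ, 1 ≤ k → k ≤ K →
      (1 - Δ) * ε / K ≤
        unlockedBudget K ε Δ k - ∑ j ∈ Finset.Icc (i - (k : ℤ) + 1) (i - 1), c j := by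
  intro k hk1 hkK
  have hKpos : (0:ℝ) < (K:ℝ) := by exact_mod_cast (by omega : 0 < K)
  have hεK : (0:ℝ) ≤ ε / K := le_of_lt (div_pos hε hKpos)
  have hA : 0 ≤ Δ * ε * ((K:ℝ))⁻¹ :=
    mul_nonneg (mul_nonneg hΔ0 hε.le) (inv_nonneg.mpr hKpos.le)
  have hm1 : 1 ≤ K / 2 := by omega
  rcases Nat.lt_or_ge k 2 with hk2 | hk2
  · -- k = 1
    have hk : k = 1 := by omega
    subst hk
    have hemp : Finset.Icc (i - (1:ℤ) + 1) (i - 1) = ∅ := by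
      apply Finset.Icc_eq_empty; omega
    have h1 : min 1 (K / 2) = 1 := by omega
    have h2 : 1 - K / 2 = 0 := by omega
    simp only [Nat.cast_one, hemp, Finset.sum_empty, unlockedBudget, h1, h2]
    push_cast
    rw [div_eq_mul_inv, div_eq_mul_inv]
    ring_nf
    linarith [hA]
  · -- k ≥ 2
    have hsum : ∑ j ∈ Finset.Icc (i - (k : ℤ) + 1) (i - 1), c j
        ≤ unlockedBudget K ε Δ (k - 1) := by
      have hle := hfeas (i - 1) le_rfl (k - 1) (by omega) (by omega)
      have hset : Finset.Icc (i - (k : ℤ) + 1) (i - 1)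
          = Finset.Icc (i - 1 - ((k - 1 : ℕ) : ℤ) + 1) (i - 1) := by
        congr 1
        push_cast [Nat.cast_sub (by omega : 1 ≤ k)]
        ring
      rw [hset]
      exact hle
    have hdiff : (1 - Δ) * ε / K + unlockedBudget K ε Δ (k - 1)
        ≤ unlockedBudget K ε Δ k := by
      unfold unlockedBudget
      rcases Nat.lt_or_ge k (K / 2 + 1) with h | h
      · -- k ≤ K/2
        have e1 : min k (K / 2) = k := by omega
        have e2 : min (k - 1) (K / 2) = k - 1 := by omega
        have e3 : k - K / 2 = 0 := by omega
        have e4 : k - 1 - K / 2 = 0 := by omega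
        rw [e1, e2, e3, e4]
        have : ((k - 1 : ℕ) : ℝ) = (k : ℝ) - 1 := by
          push_cast [Nat.cast_sub (by omega : 1 ≤ k)]; ring
        rw [this]
        push_cast
        have hΔle : (1 - Δ) * (ε / K) ≤ (1 + Δ) * (ε / K) := by nlinarith
        rw [div_eq_mul_inv, div_eq_mul_inv]
        ring_nf
        linarith [hA]
      · -- k > K/2
        have e1 : min k (K / 2) = K / 2 := by omega
        have e2 : min (k - 1) (K / 2) = K / 2 := by omega
        rw [e1, e2]
        have c3 : ((k - K / 2 : ℕ) : ℝ) = (k : ℝ) - (K / 2 : ℕ) := by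
          push_cast [Nat.cast_sub (by omega : K / 2 ≤ k)]; ring
        have c4 : ((k - 1 - K / 2 : ℕ) : ℝ) = (k : ℝ) - 1 - (K / 2 : ℕ) := by
          push_cast [Nat.cast_sub (by omega : K / 2 ≤ k - 1),
            Nat.cast_sub (by omega : 1 ≤ k)]; ring
        rw [c3, c4]
        rw [div_eq_mul_inv, div_eq_mul_inv]
        ring_nf
        linarith [hA]
    linarith
end

section
/- Main Theorem: If the cost sequence c satisfies the feasibility constraints for all rounds i' ≤ i−1, then the available budget in round i, defined as b_i = min over k ∈ {1,…,K} of (B_k − Σ_{j=i−k+1}^{i−1} c_j), is always between (1−Δ)·ε/K and (1+Δ)·ε/K, i.e., (1−Δ)·ε/K ≤ b_i ≤ (1+Δ)·ε/K. -/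
lemma budget_step (K : ℕ) (hK2 : 2 ≤ K) (ε Δ : ℝ) (hε : 0 < ε)
    (hΔ0 : 0 ≤ Δ) (hΔ1 : Δ ≤ 1) (k : ℕ) (hk1 : 1 ≤ k) (hkK : k ≤ K) :
    (1 - Δ) * ε / K + unlockedBudget K ε Δ (k - 1) ≤ unlockedBudget K ε Δ k := by
  have hKR : (0:ℝ) < K := by exact_mod_cast (by omega : 0 < K)
  have hεK : 0 < ε / K := div_pos hε hKR
  unfold unlockedBudget
  rcases le_or_gt k (K / 2) with h | h
  · have h1 : min k (K / 2) = k := by omega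
    have h2 : min (k - 1) (K / 2) = k - 1 := by omega
    have h3 : k - K / 2 = 0 := by omega
    have h4 : k - 1 - K / 2 = 0 := by omega
    rw [h1, h2, h3, h4]
    have hc : ((k - 1 : ℕ) : ℝ) = (k : ℝ) - 1 := by
      push_cast [Nat.cast_sub hk1]; ring
    rw [hc]
    have : (1 - Δ) * ε / K ≤ (1 + Δ) * (ε / K) := by
      rw [div_eq_mul_one_div, mul_comm (1 + Δ)]
      rw [div_eq_mul_one_div ε]
      nlinarith [mul_pos hε (by positivity : (0:ℝ) < 1 / K)]
    nlinarith [this]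
  · have h1 : min k (K / 2) = K / 2 := by omega
    have h2 : min (k - 1) (K / 2) = K / 2 := by omega
    have h3 : ((k - K / 2 : ℕ) : ℝ) = (k : ℝ) - (K / 2 : ℕ) := by
      push_cast [Nat.cast_sub (by omega : K / 2 ≤ k)]; ring
    have h4 : ((k - 1 - K / 2 : ℕ) : ℝ) = (k : ℝ) - 1 - (K / 2 : ℕ) := by
      push_cast [Nat.cast_sub (by omega : K / 2 ≤ k - 1), Nat.cast_sub hk1]; ring
    rw [h1, h2, h3, h4]
    rw [div_eq_mul_one_div, div_eq_mul_one_div ε]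
    ring_nf
    nlinarith [hεK]

theorem stmt_5 (K : ℕ) (hK : Even K) (hK2 : 2 ≤ K) (ε Δ : ℝ) (hε : 0 < ε)
    (hΔ0 : 0 ≤ Δ) (hΔ1 : Δ ≤ 1) (c : ℤ → ℝ)
    (hpos : ∀ j : ℤ, 0 ≤ c j) (hzero : ∀ j : ℤ, j ≤ 0 → c j = 0)
    (i : ℤ) (hi : 1 ≤ i) (hfeas : FeasibleUpTo K ε Δ c (i - 1)) :
    (1 - Δ) * ε / K ≤
      (Finset.Icc 1 K).inf' (Finset.nonempty_Icc.mpr (by omega))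
        (fun k => unlockedBudget K ε Δ k
          - ∑ j ∈ Finset.Icc (i - (k : ℤ) + 1) (i - 1), c j) ∧
    (Finset.Icc 1 K).inf' (Finset.nonempty_Icc.mpr (by omega))
        (fun k => unlockedBudget K ε Δ k
          - ∑ j ∈ Finset.Icc (i - (k : ℤ) + 1) (i - 1), c j)
      ≤ (1 + Δ) * ε / K := by
  constructor
  · apply Finset.le_inf'
    intro k hk
    simp only [Finset.mem_Icc] at hk
    obtain ⟨hk1, hkK⟩ := hk
    have hsum : ∑ j ∈ Finset.Icc (i - (k : ℤ) + 1) (i - 1), c j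
        ≤ unlockedBudget K ε Δ (k - 1) := by
      rcases eq_or_lt_of_le hk1 with h | h
      · rw [← h]
        have : Finset.Icc (i - ((1:ℕ):ℤ) + 1) (i - 1) = ∅ :=
          Finset.Icc_eq_empty (by omega)
        rw [this, Finset.sum_empty]
        simp [unlockedBudget]
      · have := hfeas (i - 1) le_rfl (k - 1) (by omega) (by omega)
        have hcast : (i - 1) - ((k - 1 : ℕ) : ℤ) + 1 = i - (k : ℤ) + 1 := by
          push_cast [Nat.cast_sub hk1]; ring
        rw [hcast] at this
        exact this
    have := budget_step K hK2 ε Δ hε hΔ0 hΔ1 k hk1 hkK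
    linarith
  · have h1 : (1 : ℕ) ∈ Finset.Icc 1 K := Finset.mem_Icc.mpr ⟨le_rfl, by omega⟩
    have := Finset.inf'_le (fun k => unlockedBudget K ε Δ k
          - ∑ j ∈ Finset.Icc (i - (k : ℤ) + 1) (i - 1), c j) h1
    refine this.trans ?_
    have hempty : Finset.Icc (i - ((1:ℕ):ℤ) + 1) (i - 1) = ∅ :=
      Finset.Icc_eq_empty (by omega)
    rw [hempty, Finset.sum_empty]
    have h1min : min 1 (K / 2) = 1 := by omega
    have h1sub : 1 - K / 2 = 0 := by omega
    rw [unlockedBudget, h1min, h1sub]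
    push_cast
    ring_nf
    simp
end

section
/- Property P3.1 (greedy optimal allocation is feasible): The K-periodic cost sequence defined for j ≥ 1 by c_j = (1+Δ)·ε/K if ((j−1) mod K) < K/2 and c_j = (1−Δ)·ε/K otherwise (with c_j = 0 for j ≤ 0) satisfies all budget constraints: for every round i ≥ 1 and every k ∈ {1,…,K}, Σ_{j=i−k+1}^{i} c_j ≤ B_k. -/
/-!
A window of `k ≤ K` consecutive rounds meets each residue class mod `K` at most once, so it
contains at most `min k (K/2)` rounds of the expensive first half of the period. Since the
expensive rate dominates the cheap one, the window's cost is at most that of `min k (K/2)`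
expensive rounds followed by cheap ones, which is exactly `B_k`.
-/

open Finset

theorem Int.injOn_sub_emod_Ico (n r a : ℤ) :
    Set.InjOn (fun j => (j - r) % a) (Ico n (n + a)) := by
  rcases lt_or_ge a 0 with ha | ha
  · simp [Ico_eq_empty_of_le (by omega : n + a ≤ n)]
  have hinj : Set.InjOn (· % a) (Ico (n - r) (n - r + a)) :=
    card_image_iff.mp (by simp [Int.image_Ico_emod _ _ ha])
  intro j₁ hj₁ j₂ hj₂ h
  simp only [coe_Ico, Set.mem_Ico] at hj₁ hj₂
  have := hinj (by simp only [coe_Ico, Set.mem_Ico]; omega)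
    (by simp only [coe_Ico, Set.mem_Ico]; omega) h
  omega

theorem Int.card_filter_sub_emod_lt_le {n a : ℤ} {s : Finset ℤ}
    (hs : s ⊆ Ico n (n + a)) (r : ℤ) (m : ℕ) :
    #(s.filter fun j => (j - r) % a < m) ≤ m := by
  have h := card_le_card_of_injOn (fun j => (j - r) % a)
    (s := s.filter fun j => (j - r) % a < m) (t := Ico (0 : ℤ) m)
    (fun j hj => by
      rw [mem_coe, mem_filter] at hj
      rw [mem_coe, mem_Ico]
      have hpos := mem_Ico.mp (hs hj.1)
      exact ⟨Int.emod_nonneg _ (by omega), hj.2⟩)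
    ((Int.injOn_sub_emod_Ico n r a).mono (coe_subset.mpr ((filter_subset _ s).trans hs)))
  simpa using h

theorem sum_ite_le_of_card_filter_le {ι R : Type*} [CommRing R] [LinearOrder R]
    [IsStrictOrderedRing R] {s : Finset ι} {p : ι → Prop} [DecidablePred p] {a b : R}
    (hba : b ≤ a) {m : ℕ} (hp : #(s.filter p) ≤ m) (hm : m ≤ #s) :
    ∑ i ∈ s, (if p i then a else b) ≤ m * a + (#s - m : ℕ) * b := by
  rw [sum_ite, sum_const, sum_const, nsmul_eq_mul, nsmul_eq_mul,
    ← card_filter_add_card_filter_not p (s := s)] at *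
  push_cast [hm]
  nlinarith [mul_le_mul_of_nonneg_right (Nat.cast_le.mpr hp : (#(s.filter p) : R) ≤ m)
    (sub_nonneg.mpr hba)]

theorem unlockedBudget_eq (K : ℕ) (ε Δ : ℝ) (k : ℕ) :
    unlockedBudget K ε Δ k =
      (min k (K / 2) : ℕ) * ((1 + Δ) * ε / K) + (k - min k (K / 2) : ℕ) * ((1 - Δ) * ε / K) := by
  rw [unlockedBudget, tsub_min]
  ring

theorem stmt_6_general (K : ℕ) (ε Δ : ℝ) (hε : 0 < ε)
    (hΔ0 : 0 ≤ Δ) (hΔ1 : Δ ≤ 1) (c : ℤ → ℝ)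
    (hc : ∀ j : ℤ, c j =
      if j ≤ 0 then 0
      else if (j - 1) % (K : ℤ) < ((K / 2 : ℕ) : ℤ) then (1 + Δ) * ε / K
      else (1 - Δ) * ε / K) :
    ∀ i : ℤ, 1 ≤ i → ∀ k : ℕ, 1 ≤ k → k ≤ K →
      ∑ j ∈ Finset.Icc (i - (k : ℤ) + 1) i, c j ≤ unlockedBudget K ε Δ k := by
  intro i _ k _ hkK
  have hcheap : 0 ≤ (1 - Δ) * ε / K :=
    div_nonneg (mul_nonneg (sub_nonneg.mpr hΔ1) hε.le) K.cast_nonneg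
  have hba : (1 - Δ) * ε / K ≤ (1 + Δ) * ε / K := by gcongr; linarith
  have hcost (j : ℤ) : c j ≤ if (j - 1) % (K : ℤ) < ((K / 2 : ℕ) : ℤ)
      then (1 + Δ) * ε / K else (1 - Δ) * ε / K := by
    rw [hc j]; split_ifs <;> linarith
  have hcard : #(Icc (i - k + 1) i) = k := by rw [Int.card_Icc]; omega
  have hwindow : Icc (i - k + 1) i ⊆ Ico (i - k + 1) (i - k + 1 + K) := by
    intro j; simp only [mem_Icc, mem_Ico]; omega
  calc ∑ j ∈ Icc (i - k + 1) i, c j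
      ≤ ∑ j ∈ Icc (i - k + 1) i, if (j - 1) % (K : ℤ) < ((K / 2 : ℕ) : ℤ)
          then (1 + Δ) * ε / K else (1 - Δ) * ε / K := sum_le_sum fun j _ => hcost j
    _ ≤ _ := sum_ite_le_of_card_filter_le hba
        (le_min (card_filter_le _ _ |>.trans hcard.le)
          (Int.card_filter_sub_emod_lt_le hwindow 1 (K / 2)))
        ((min_le_left _ _).trans hcard.ge)
    _ = unlockedBudget K ε Δ k := by rw [hcard, unlockedBudget_eq]

theorem stmt_6 (K : ℕ) (hK : Even K) (hK2 : 2 ≤ K) (ε Δ : ℝ) (hε : 0 < ε)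
    (hΔ0 : 0 ≤ Δ) (hΔ1 : Δ ≤ 1) (c : ℤ → ℝ)
    (hc : ∀ j : ℤ, c j =
      if j ≤ 0 then 0
      else if (j - 1) % (K : ℤ) < ((K / 2 : ℕ) : ℤ) then (1 + Δ) * ε / K
      else (1 - Δ) * ε / K) :
    ∀ i : ℤ, 1 ≤ i → ∀ k : ℕ, 1 ≤ k → k ≤ K →
      ∑ j ∈ Finset.Icc (i - (k : ℤ) + 1) i, c j ≤ unlockedBudget K ε Δ k :=
  stmt_6_general K ε Δ hε hΔ0 hΔ1 c hc
end

section
/- Collapse of the older half of constraints: Suppose the cost sequence satisfies c_j ≥ (1−Δ)·ε/K for all rounds j with i−K+1 ≤ j ≤ i−1. Then for every k with K/2 ≤ k ≤ K, the remaining budget of the oldest group is at most that of the group of age k: B_K − Σ_{j=i−K+1}^{i−1} c_j ≤ B_k − Σ_{j=i−k+1}^{i−1} c_j. That is, among the older half of the active groups, the oldest group's budget constraint is the most restrictive. -/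
theorem stmt_9 (K : ℕ) (hK : Even K) (hK2 : 2 ≤ K) (ε Δ : ℝ) (hε : 0 < ε)
    (hΔ0 : 0 ≤ Δ) (hΔ1 : Δ ≤ 1) (c : ℤ → ℝ) (i : ℤ)
    (hc : ∀ j : ℤ, i - K + 1 ≤ j → j ≤ i - 1 → (1 - Δ) * ε / K ≤ c j) :
    ∀ k : ℕ, K / 2 ≤ k → k ≤ K →
      unlockedBudget K ε Δ K - ∑ j ∈ Finset.Icc (i - (K : ℤ) + 1) (i - 1), c j ≤
      unlockedBudget K ε Δ k - ∑ j ∈ Finset.Icc (i - (k : ℤ) + 1) (i - 1), c j := by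
  intro k hk1 hk2
  have hkK : (k : ℤ) ≤ K := by exact_mod_cast hk2
  have hk1' : (K : ℤ) / 2 ≤ k := by
    have : ((K / 2 : ℕ) : ℤ) ≤ k := by exact_mod_cast hk1
    omega
  have hioc1 : Finset.Icc (i - (K : ℤ) + 1) (i - 1) = Finset.Ioc (i - (K : ℤ)) (i - 1) := by
    ext x; simp only [Finset.mem_Icc, Finset.mem_Ioc]; omega
  have hioc2 : Finset.Icc (i - (k : ℤ) + 1) (i - 1) = Finset.Ioc (i - (k : ℤ)) (i - 1) := by
    ext x; simp only [Finset.mem_Icc, Finset.mem_Ioc]; omega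
  have hsplit : Finset.Ioc (i - (K : ℤ)) (i - 1)
      = Finset.Ioc (i - (K : ℤ)) (i - (k : ℤ)) ∪ Finset.Ioc (i - (k : ℤ)) (i - 1) := by
    rw [Finset.Ioc_union_Ioc_eq_Ioc] <;> omega
  have hdisj : Disjoint (Finset.Ioc (i - (K : ℤ)) (i - (k : ℤ)))
      (Finset.Ioc (i - (k : ℤ)) (i - 1)) := by
    rw [Finset.disjoint_left]
    intro x hx hx'
    simp only [Finset.mem_Ioc] at hx hx'
    omega
  rw [hioc1, hioc2, hsplit, Finset.sum_union hdisj]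
  -- reduces to B_K - B_k ≤ ∑ over Ioc (i-K) (i-k)
  have hlow : ((K - k : ℕ) : ℝ) * ((1 - Δ) * ε / K) ≤
      ∑ j ∈ Finset.Ioc (i - (K : ℤ)) (i - (k : ℤ)), c j := by
    have hcard : (Finset.Ioc (i - (K : ℤ)) (i - (k : ℤ))).card = (K - k : ℕ) := by
      rw [Int.card_Ioc]; omega
    calc ((K - k : ℕ) : ℝ) * ((1 - Δ) * ε / K)
        = ∑ _j ∈ Finset.Ioc (i - (K : ℤ)) (i - (k : ℤ)), ((1 - Δ) * ε / K) := by
          rw [Finset.sum_const, hcard, nsmul_eq_mul]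
      _ ≤ ∑ j ∈ Finset.Ioc (i - (K : ℤ)) (i - (k : ℤ)), c j := by
          apply Finset.sum_le_sum
          intro j hj
          simp only [Finset.mem_Ioc] at hj
          exact hc j (by omega) (by omega)
  have hbudget : unlockedBudget K ε Δ K - unlockedBudget K ε Δ k
      = ((K - k : ℕ) : ℝ) * ((1 - Δ) * ε / K) := by
    unfold unlockedBudget
    have h1 : min K (K / 2) = K / 2 := min_eq_right (Nat.div_le_self _ _)
    have h2 : min k (K / 2) = K / 2 := min_eq_right hk1
    rw [h1, h2]
    have hK0 : (K : ℝ) ≠ 0 := by positivity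
    have e1 : ((K - K / 2 : ℕ) : ℝ) = (K : ℝ) - ((K / 2 : ℕ) : ℝ) := by
      have : K / 2 ≤ K := Nat.div_le_self _ _
      push_cast [Nat.cast_sub this]; ring
    have e2 : ((k - K / 2 : ℕ) : ℝ) = (k : ℝ) - ((K / 2 : ℕ) : ℝ) := by
      push_cast [Nat.cast_sub hk1]; ring
    have e3 : ((K - k : ℕ) : ℝ) = (K : ℝ) - (k : ℝ) := by
      push_cast [Nat.cast_sub hk2]; ring
    rw [e1, e2, e3]; field_simp; ring
  linarith
end

section
/- Collapse of the newer half of constraints: If the cost sequence c satisfies the feasibility constraints for all rounds i' ≤ i−1, then for every k with 1 ≤ k ≤ K/2, the remaining budget of the group of age k is at least (1+Δ)·ε/K, the remaining budget of the newest group: B_k − Σ_{j=i−k+1}^{i−1} c_j ≥ (1+Δ)·ε/K = B_1. That is, among the newer half of the active groups, the newest group's budget constraint is the most restrictive. -/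
theorem stmt_10 (K : ℕ) (hK : Even K) (hK2 : 2 ≤ K) (ε Δ : ℝ) (hε : 0 < ε)
    (hΔ0 : 0 ≤ Δ) (hΔ1 : Δ ≤ 1) (c : ℤ → ℝ)
    (hpos : ∀ j : ℤ, 0 ≤ c j) (hzero : ∀ j : ℤ, j ≤ 0 → c j = 0)
    (i : ℤ) (hi : 1 ≤ i) (hfeas : FeasibleUpTo K ε Δ c (i - 1)) :
    (∀ k : ℕ, 1 ≤ k → k ≤ K / 2 →
      (1 + Δ) * ε / K ≤
        unlockedBudget K ε Δ k - ∑ j ∈ Finset.Icc (i - (k : ℤ) + 1) (i - 1), c j) ∧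
    unlockedBudget K ε Δ 1 = (1 + Δ) * ε / K := by
  have hK2' : 1 ≤ K / 2 := Nat.one_le_div_iff (by norm_num) |>.2 hK2
  have hB : ∀ k : ℕ, k ≤ K / 2 → unlockedBudget K ε Δ k = (ε / K) * ((1 + Δ) * k) := by
    intro k hk
    unfold unlockedBudget
    rw [min_eq_left hk, Nat.sub_eq_zero_of_le hk]
    push_cast; ring
  constructor
  · intro k hk1 hk2
    rcases Nat.exists_eq_add_of_le hk1 with ⟨m, rfl⟩
    have hsum : ∑ j ∈ Finset.Icc (i - ((1 + m : ℕ) : ℤ) + 1) (i - 1), c j ≤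
        (ε / K) * ((1 + Δ) * m) := by
      rcases Nat.eq_zero_or_pos m with hm | hm
      · subst hm
        simp [Finset.Icc_self, show i - (1 : ℤ) + 1 = i by ring,
          Finset.Icc_eq_empty_of_lt (show i - 1 < i - 1 + 1 by omega)]
      · have h1 : m ≤ K := le_trans (by omega) (Nat.div_le_self K 2)
        have := hfeas (i - 1) le_rfl m hm h1
        rw [hB m (by omega)] at this
        have heq : (i - 1) - (m : ℤ) + 1 = i - ((1 + m : ℕ) : ℤ) + 1 := by push_cast; ring
        rw [heq] at this
        exact this
    rw [hB (1 + m) hk2]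
    have : (ε / K) * ((1 + Δ) * ((1 + m : ℕ) : ℝ)) - (ε / K) * ((1 + Δ) * m)
        = (1 + Δ) * ε / K := by push_cast; ring
    linarith
  · rw [hB 1 hK2']; push_cast; ring
end

section
/- Reduction to two constraints: Suppose the cost sequence c satisfies the feasibility constraints for all rounds i' ≤ i−1 and additionally c_j ≥ (1−Δ)·ε/K for all rounds j with i−K+1 ≤ j ≤ i−1. Then for any candidate round-i cost c_i ≥ 0, the feasibility constraints at round i hold for all ages k ∈ {1,…,K} if and only if they hold for the newest group (k = 1, i.e., c_i ≤ (1+Δ)·ε/K) and the oldest group (k = K, i.e., Σ_{j=i−K+1}^{i} c_j ≤ ε). -/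
theorem stmt_11 (K : ℕ) (hK : Even K) (hK2 : 2 ≤ K) (ε Δ : ℝ) (hε : 0 < ε)
    (hΔ0 : 0 ≤ Δ) (hΔ1 : Δ ≤ 1) (c : ℤ → ℝ)
    (hpos : ∀ j : ℤ, 0 ≤ c j) (hzero : ∀ j : ℤ, j ≤ 0 → c j = 0)
    (i : ℤ) (hi : 1 ≤ i) (hfeas : FeasibleUpTo K ε Δ c (i - 1))
    (hlow : ∀ j : ℤ, i - K + 1 ≤ j → j ≤ i - 1 → (1 - Δ) * ε / K ≤ c j) :
    (∀ k : ℕ, 1 ≤ k → k ≤ K →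
        ∑ j ∈ Finset.Icc (i - (k : ℤ) + 1) i, c j ≤ unlockedBudget K ε Δ k) ↔
      (c i ≤ (1 + Δ) * ε / K ∧ ∑ j ∈ Finset.Icc (i - (K : ℤ) + 1) i, c j ≤ ε) := by
  have hKne : (K : ℝ) ≠ 0 := by positivity
  obtain ⟨m, hm⟩ := hK
  have hmK : K = 2 * m := by omega
  have hm1 : 1 ≤ m := by omega
  have hdiv : K / 2 = m := by omega
  have hIcc : ∀ a b : ℤ, Finset.Icc (a + 1) b = Finset.Ioc a b := by
    intro a b; ext x; simp [Int.add_one_le_iff]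
  constructor
  · intro H
    constructor
    · have h1 := H 1 le_rfl (by omega)
      simp only [Nat.cast_one] at h1
      rw [show i - 1 + 1 = i by ring, Finset.Icc_self, Finset.sum_singleton] at h1
      have : unlockedBudget K ε Δ 1 = (1 + Δ) * ε / K := by
        simp [unlockedBudget, hdiv, Nat.min_eq_left hm1, Nat.sub_eq_zero_of_le hm1]
        ring
      linarith [h1, this.ge]
    · have h2 := H K (by omega) le_rfl
      have : unlockedBudget K ε Δ K = ε := by
        simp only [unlockedBudget, hdiv, Nat.min_eq_right (by omega : m ≤ K),
          show K - m = m by omega]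
        have hmc : ((m : ℝ)) = K / 2 := by rw [hmK]; push_cast; ring
        rw [hmc, show (1+Δ)*((K:ℝ)/2)+(1-Δ)*((K:ℝ)/2) = (K:ℝ) by ring]
        exact div_mul_cancel₀ ε hKne
      linarith [h2, this.ge]
  · rintro ⟨h1, hKsum⟩ k hk1 hkK
    rcases le_or_gt k m with hkm | hkm
    · -- young group: split off c i and use feasibility at round i-1 with age k-1
      have hbud : unlockedBudget K ε Δ k = (ε / K) * ((1 + Δ) * k) := by
        simp [unlockedBudget, hdiv, Nat.min_eq_left hkm, Nat.sub_eq_zero_of_le hkm]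
      have hsplit : ∑ j ∈ Finset.Icc (i - (k : ℤ) + 1) i, c j
          = (∑ j ∈ Finset.Icc (i - (k : ℤ) + 1) (i - 1), c j) + c i := by
        have hu : Finset.Icc (i - (k:ℤ) + 1) i
            = Finset.Icc (i - (k:ℤ) + 1) (i-1) ∪ Finset.Icc i i := by
          ext x; simp only [Finset.mem_union, Finset.mem_Icc]; omega
        rw [hu, Finset.sum_union (by simp [Finset.disjoint_left]; omega), Finset.Icc_self,
          Finset.sum_singleton]
      have hmid : ∑ j ∈ Finset.Icc (i - (k : ℤ) + 1) (i - 1), c j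
          ≤ (ε / K) * ((1 + Δ) * (k - 1)) := by
        rcases Nat.eq_or_lt_of_le hk1 with h | h
        · rw [← h]; simp
        · have hf := hfeas (i - 1) le_rfl (k - 1) (by omega) (by omega)
          have hcast : ((k - 1 : ℕ) : ℤ) = (k : ℤ) - 1 := by omega
          rw [hcast, show i - 1 - ((k:ℤ) - 1) + 1 = i - k + 1 by ring] at hf
          have hbud' : unlockedBudget K ε Δ (k - 1) = (ε / K) * ((1 + Δ) * ((k:ℝ) - 1)) := by
            simp only [unlockedBudget, hdiv, Nat.min_eq_left (by omega : k - 1 ≤ m),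
              Nat.sub_eq_zero_of_le (by omega : k - 1 ≤ m)]
            have : ((k - 1 : ℕ) : ℝ) = (k : ℝ) - 1 := by
              push_cast [Nat.cast_sub hk1]; ring
            rw [this]; ring
          linarith [hf, hbud'.le]
      rw [hsplit, hbud]
      have : (ε / K) * ((1 + Δ) * (k - 1)) + (1 + Δ) * ε / K = (ε / K) * ((1 + Δ) * k) := by
        ring
      linarith
    · -- old group: total minus the lower-bounded prefix
      have hbud : unlockedBudget K ε Δ k
          = (ε / K) * ((1 + Δ) * m + (1 - Δ) * ((k : ℝ) - m)) := by
        simp only [unlockedBudget, hdiv, Nat.min_eq_right (by omega : m ≤ k)]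
        have : ((k - m : ℕ) : ℝ) = (k : ℝ) - m := by
          push_cast [Nat.cast_sub (by omega : m ≤ k)]; ring
        rw [this]
      have hsplit : ∑ j ∈ Finset.Icc (i - (K : ℤ) + 1) i, c j
          = (∑ j ∈ Finset.Ioc (i - (K : ℤ)) (i - k), c j)
            + ∑ j ∈ Finset.Icc (i - (k : ℤ) + 1) i, c j := by
        rw [show i - (K:ℤ) + 1 = (i - K) + 1 by ring, hIcc,
          show i - (k:ℤ) + 1 = (i - k) + 1 by ring, hIcc,
          ← Finset.sum_union (by simp [Finset.disjoint_left]; omega),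
          Finset.Ioc_union_Ioc_eq_Ioc (by push_cast; omega) (by push_cast; omega)]
      have hcard : (Finset.Ioc (i - (K : ℤ)) (i - k)).card = K - k := by
        rw [Int.card_Ioc]; omega
      have hlb : ((K - k : ℕ) : ℝ) * ((1 - Δ) * ε / K)
          ≤ ∑ j ∈ Finset.Ioc (i - (K : ℤ)) (i - k), c j := by
        calc ((K - k : ℕ) : ℝ) * ((1 - Δ) * ε / K)
            = (Finset.Ioc (i - (K : ℤ)) (i - k)).card • ((1 - Δ) * ε / K) := by
              rw [hcard, nsmul_eq_mul]
          _ ≤ ∑ j ∈ Finset.Ioc (i - (K : ℤ)) (i - k), c j := by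
              apply Finset.card_nsmul_le_sum
              intro j hj
              simp only [Finset.mem_Ioc] at hj
              exact hlow j (by omega) (by omega)
      have hsum : ∑ j ∈ Finset.Icc (i - (k : ℤ) + 1) i, c j
          ≤ ε - ((K - k : ℕ) : ℝ) * ((1 - Δ) * ε / K) := by
        rw [hsplit] at hKsum; linarith
      have hcast : ((K - k : ℕ) : ℝ) = (K : ℝ) - k := by
        push_cast [Nat.cast_sub hkK]; ring
      have hKR : (K : ℝ) = 2 * m := by rw [hmK]; push_cast; ring
      have key : ε - ((K - k : ℕ) : ℝ) * ((1 - Δ) * ε / K)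
          = (ε / K) * ((1 + Δ) * m + (1 - Δ) * ((k : ℝ) - m)) := by
        rw [hcast]; field_simp; rw [hKR]; ring
      rw [hbud]; linarith
end

section
/- Property P4 (available budget formula): Suppose the cost sequence c satisfies the feasibility constraints for all rounds i' ≤ i−1 and additionally c_j ≥ (1−Δ)·ε/K for all rounds j with i−K+1 ≤ j ≤ i−1. Then the available budget in round i satisfies b_i = min( ε − Σ_{j=i−K+1}^{i−1} c_j , (1+Δ)·ε/K ), where b_i = min over k ∈ {1,…,K} of (B_k − Σ_{j=i−k+1}^{i−1} c_j). -/
/-!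
For `k ≤ K/2` the budget `B_k = k·(1+Δ)ε/K` grows at the per-round rate `B_1`, and by feasibility
each past cost is at most `B_1`, so the slack `B_k − (spent)` of the age-`k` group is at least
`B_1`. For `k ≥ K/2` the budget is `B_k = ε − (K−k)(1−Δ)ε/K`, and the `K − k` rounds the age-`K`
group has paid for beyond those of the age-`k` group each cost at least `(1−Δ)ε/K`, so the slack
of the age-`k` group is at least that of the age-`K` group. The two bounds are attained at
`k = 1` and `k = K`.
-/

open Finset

/-- What a group that has been active for `k` rounds at round `i` spent in the rounds before `i`. -/
noncomputable def spentBefore (c : ℤ → ℝ) (i : ℤ) (k : ℕ) : ℝ :=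
  ∑ j ∈ Icc (i - (k : ℤ) + 1) (i - 1), c j

lemma spentBefore_one (c : ℤ → ℝ) (i : ℤ) : spentBefore c i 1 = 0 :=
  sum_eq_zero fun j hj => by simp only [mem_Icc] at hj; omega

lemma spentBefore_eq_sum_Ioc (c : ℤ → ℝ) (i : ℤ) (k : ℕ) :
    spentBefore c i k = ∑ j ∈ Ioc (i - k) (i - 1), c j := by
  rw [spentBefore, Icc_add_one_left_eq_Ioc]

section Budget

variable {K : ℕ} {ε Δ : ℝ} {k : ℕ}

lemma unlockedBudget_of_le_half (hk : k ≤ K / 2) :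
    unlockedBudget K ε Δ k = k * ((1 + Δ) * ε / K) := by
  rw [unlockedBudget, min_eq_left hk, Nat.sub_eq_zero_of_le hk]
  push_cast
  ring

lemma unlockedBudget_one (hK : 2 ≤ K) : unlockedBudget K ε Δ 1 = (1 + Δ) * ε / K := by
  rw [unlockedBudget_of_le_half (by omega), Nat.cast_one, one_mul]

lemma unlockedBudget_of_half_le (hK : Even K) (hK0 : 0 < K) (hk : K / 2 ≤ k) (hkK : k ≤ K) :
    unlockedBudget K ε Δ k = ε - (K - k) * ((1 - Δ) * ε / K) := by
  obtain ⟨h, rfl⟩ := hK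
  have hh : (h + h) / 2 = h := by omega
  rw [hh] at hk
  rw [unlockedBudget, hh, min_eq_right hk, Nat.cast_sub hk]
  have hh0 : (0 : ℝ) < h := by exact_mod_cast (by omega : 0 < h)
  push_cast
  field_simp
  ring

lemma unlockedBudget_self (hK : Even K) (hK0 : 0 < K) : unlockedBudget K ε Δ K = ε := by
  rw [unlockedBudget_of_half_le hK hK0 (Nat.div_le_self K 2) le_rfl]
  ring

end Budget

section Feasible

variable {K : ℕ} {ε Δ : ℝ} {c : ℤ → ℝ} {i : ℤ} {k : ℕ}

lemma FeasibleUpTo.le_unlockedBudget_one {m : ℤ} (hf : FeasibleUpTo K ε Δ c m) (hK : 2 ≤ K)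
    {j : ℤ} (hj : j ≤ m) : c j ≤ (1 + Δ) * ε / K := by
  simpa [unlockedBudget_one hK] using hf j hj 1 le_rfl (by omega)

lemma FeasibleUpTo.le_unlockedBudget_sub_spentBefore (hf : FeasibleUpTo K ε Δ c (i - 1))
    (hK : 2 ≤ K) (hk1 : 1 ≤ k) (hk : k ≤ K / 2) :
    (1 + Δ) * ε / K ≤ unlockedBudget K ε Δ k - spentBefore c i k := by
  have hcard : #(Ioc (i - k) (i - 1)) = k - 1 := by rw [Int.card_Ioc]; omega
  have hspent : spentBefore c i k ≤ (k - 1 : ℕ) * ((1 + Δ) * ε / K) := by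
    rw [spentBefore_eq_sum_Ioc, ← hcard, ← nsmul_eq_mul]
    exact sum_le_card_nsmul _ _ _ fun j hj => hf.le_unlockedBudget_one hK (mem_Ioc.1 hj).2
  rw [unlockedBudget_of_le_half hk]
  rw [Nat.cast_sub hk1, Nat.cast_one] at hspent
  linarith

lemma sub_spentBefore_le_of_half_le (hK : Even K) (hk1 : 1 ≤ k)
    (hlow : ∀ j : ℤ, i - K + 1 ≤ j → j ≤ i - 1 → (1 - Δ) * ε / K ≤ c j)
    (hk : K / 2 ≤ k) (hkK : k ≤ K) :
    ε - spentBefore c i K ≤ unlockedBudget K ε Δ k - spentBefore c i k := by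
  have hcard : #(Ioc (i - K) (i - k)) = K - k := by rw [Int.card_Ioc]; omega
  have hextra : (K - k : ℕ) * ((1 - Δ) * ε / K) ≤ ∑ j ∈ Ioc (i - K) (i - k), c j := by
    rw [← hcard, ← nsmul_eq_mul]
    exact card_nsmul_le_sum _ _ _ fun j hj => by
      obtain ⟨hj1, hj2⟩ := mem_Ioc.1 hj
      exact hlow j (by omega) (by omega)
  have hsplit : spentBefore c i K = ∑ j ∈ Ioc (i - K) (i - k), c j + spentBefore c i k := by
    rw [spentBefore_eq_sum_Ioc, spentBefore_eq_sum_Ioc,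
      ← sum_union (Ioc_disjoint_Ioc_of_le le_rfl), Ioc_union_Ioc_eq_Ioc (by omega) (by omega)]
  rw [unlockedBudget_of_half_le hK (by omega) hk hkK]
  rw [Nat.cast_sub hkK] at hextra
  linarith

end Feasible

theorem stmt_12 (K : ℕ) (hK : Even K) (hK2 : 2 ≤ K) (ε Δ : ℝ) (c : ℤ → ℝ)
    (i : ℤ) (hfeas : FeasibleUpTo K ε Δ c (i - 1))
    (hlow : ∀ j : ℤ, i - K + 1 ≤ j → j ≤ i - 1 → (1 - Δ) * ε / K ≤ c j) :
    (Finset.Icc 1 K).inf' (Finset.nonempty_Icc.mpr (by omega))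
        (fun k => unlockedBudget K ε Δ k
          - ∑ j ∈ Finset.Icc (i - (k : ℤ) + 1) (i - 1), c j)
      = min (ε - ∑ j ∈ Finset.Icc (i - (K : ℤ) + 1) (i - 1), c j)
          ((1 + Δ) * ε / K) := by
  change (Icc 1 K).inf' _ (fun k => unlockedBudget K ε Δ k - spentBefore c i k)
    = min (ε - spentBefore c i K) _
  apply le_antisymm
  · have hslack {k : ℕ} (hk : k ∈ Icc 1 K) :=
      inf'_le (fun k => unlockedBudget K ε Δ k - spentBefore c i k) hk
    refine le_min ?_ ?_
    · simpa only [unlockedBudget_self hK (by omega)] using hslack (right_mem_Icc.2 (by omega))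
    · simpa only [unlockedBudget_one hK2, spentBefore_one, sub_zero]
        using hslack (left_mem_Icc.2 (by omega))
  · refine le_inf' _ _ fun k hk => ?_
    obtain ⟨hk1, hkK⟩ := mem_Icc.1 hk
    rcases le_total k (K / 2) with hk | hk
    · exact (min_le_right _ _).trans (hfeas.le_unlockedBudget_sub_spentBefore hK2 hk1 hk)
    · exact (min_le_left _ _).trans (sub_spentBefore_le_of_half_le hK hk1 hlow hk hkK)
end
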